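/- Fix A, C, D > 0, d ∈ ℝ, ε ∈ ℝ, set 𝕀 = diag(A, C, C) (the dynamically symmetric case B = C) and 𝐈(Γ) = 𝕀 + D·E − D·Γ Γᵀ. Let Ω, Γ : ℝ → ℝ³ be differentiable curves with |Γ(t)| = 1, set 𝐌(t) = 𝐈(Γ(t))Ω(t) + dΓ(t), and suppose 𝐌̇(t) = 𝐌(t) × Ω(t) and Γ̇(t) = ε Γ(t) × Ω(t) for all t. Define G(t) = (A − C) Ω₁(t) Γ₁(t) + C ⟨Ω(t), Γ(t)⟩. Then for all t, Ġ(t) = (ε − 1)(A − C) Ω₁(t) (Γ₂(t) Ω₃(t) − Γ₃(t) Ω₂(t)); equivalently, ε Ġ(t) = (ε − 1)(A − C) Ω₁(t) Γ̇₁(t). -/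

import Mathlib

/-!
Since `|Γ| = 1`, `G = ⟨𝐌, Γ⟩ − d`. Differentiating along the flow,
`Ġ = ⟨𝐌 × Ω, Γ⟩ + ε ⟨𝐌, Γ × Ω⟩ = (1 − ε) ⟨Γ, 𝐌 × Ω⟩`. For `B = C` one has
`𝐌 = (C + D) Ω + (A − C) Ω₁ e₁ + (d − D ⟨Γ, Ω⟩) Γ`, and only the `e₁` term survives in the
triple product `⟨Γ, 𝐌 × Ω⟩`.
-/

open Matrix

/-- The modified inertia operator `𝐈(Γ) = diag(A,B,C) + D·E − D·Γ Γᵀ` of the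
spherical ball bearing problem with one ball. -/
noncomputable def modInertia (A B C D : ℝ) (Γ : Fin 3 → ℝ) : Matrix (Fin 3) (Fin 3) ℝ :=
  Matrix.diagonal ![A, B, C] + D • (1 : Matrix (Fin 3) (Fin 3) ℝ) - D • vecMulVec Γ Γ

theorem HasDerivAt.dotProduct {𝕜 ι : Type*} [NontriviallyNormedField 𝕜] [Fintype ι]
    {f g : 𝕜 → ι → 𝕜} {f' g' : ι → 𝕜} {t : 𝕜}
    (hf : HasDerivAt f f' t) (hg : HasDerivAt g g' t) :
    HasDerivAt (fun s => f s ⬝ᵥ g s) (f' ⬝ᵥ g t + f t ⬝ᵥ g') t :=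
  (HasDerivAt.fun_sum (u := Finset.univ)
    fun i _ => (hasDerivAt_pi.mp hf i).mul (hasDerivAt_pi.mp hg i)).congr_deriv
      Finset.sum_add_distrib

theorem modInertia_symm_mulVec (A C D : ℝ) (Γ Ω : Fin 3 → ℝ) :
    modInertia A C C D Γ *ᵥ Ω
      = (C + D) • Ω + ((A - C) * Ω 0) • Pi.single 0 1 - (D * (Γ ⬝ᵥ Ω)) • Γ := by
  ext i
  fin_cases i <;>
    simp [modInertia, mulVec, dotProduct, Fin.sum_univ_three, vecMulVec_apply,
      diagonal_apply, one_apply] <;> ring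

theorem modInertia_symm_mulVec_dotProduct (A C D : ℝ) {Γ : Fin 3 → ℝ} (hΓ : Γ ⬝ᵥ Γ = 1)
    (Ω : Fin 3 → ℝ) :
    modInertia A C C D Γ *ᵥ Ω ⬝ᵥ Γ = (A - C) * Ω 0 * Γ 0 + C * (Ω ⬝ᵥ Γ) := by
  rw [modInertia_symm_mulVec]
  simp only [sub_dotProduct, add_dotProduct, smul_dotProduct, hΓ, single_one_dotProduct,
    dotProduct_comm Γ Ω, smul_eq_mul]
  ring

theorem dotProduct_modInertia_symm_mulVec_add_cross (A C D d : ℝ) (Γ Ω : Fin 3 → ℝ) :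
    Γ ⬝ᵥ (modInertia A C C D Γ *ᵥ Ω + d • Γ) ⨯₃ Ω
      = (A - C) * Ω 0 * (Γ 2 * Ω 1 - Γ 1 * Ω 2) := by
  rw [modInertia_symm_mulVec]
  simp only [map_add, map_sub, map_smul, LinearMap.add_apply, LinearMap.sub_apply,
    LinearMap.smul_apply, cross_self, dotProduct_add, dotProduct_sub, dotProduct_smul,
    dot_self_cross, smul_zero, add_zero, sub_zero, smul_eq_mul, mul_zero]
  simp [cross_apply, dotProduct, Fin.sum_univ_three, -mul_eq_mul_left_iff]
  ring

theorem spherical_ball_bearing_G_derivative_general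
    (A C D : ℝ) (d ε : ℝ)
    (Ω Γ : ℝ → Fin 3 → ℝ)
    (hunit : ∀ t : ℝ, Γ t ⬝ᵥ Γ t = 1)
    (M : ℝ → Fin 3 → ℝ)
    (hM : ∀ t : ℝ, M t = (modInertia A C C D (Γ t)).mulVec (Ω t) + d • Γ t)
    (hMdot : ∀ t : ℝ, HasDerivAt M (M t ⨯₃ Ω t) t)
    (hΓdot : ∀ t : ℝ, HasDerivAt Γ (ε • (Γ t ⨯₃ Ω t)) t) :
    ∀ t : ℝ,
      HasDerivAt (fun s => (A - C) * Ω s 0 * Γ s 0 + C * (Ω s ⬝ᵥ Γ s))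
        ((ε - 1) * (A - C) * Ω t 0 * (Γ t 1 * Ω t 2 - Γ t 2 * Ω t 1)) t := by
  intro t
  have hG : (fun s => (A - C) * Ω s 0 * Γ s 0 + C * (Ω s ⬝ᵥ Γ s))
      = fun s => M s ⬝ᵥ Γ s - d := by
    funext s
    rw [hM s, add_dotProduct, modInertia_symm_mulVec_dotProduct A C D (hunit s),
      smul_dotProduct, hunit s, smul_eq_mul]
    ring
  have hM_cross : M t ⬝ᵥ Γ t ⨯₃ Ω t = -(Γ t ⬝ᵥ M t ⨯₃ Ω t) := by
    rw [triple_product_permutation, ← cross_anticomm, dotProduct_neg]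
  rw [hG]
  refine (((hMdot t).dotProduct (hΓdot t)).sub_const d).congr_deriv ?_
  rw [dotProduct_comm (M t ⨯₃ Ω t), dotProduct_smul, hM_cross, hM t,
    dotProduct_modInertia_symm_mulVec_add_cross, smul_eq_mul]
  ring

/-- In the dynamically symmetric case `B = C` of the reduced
spherical ball bearing system with one ball, the variable
`G = (A − C) Ω₁ Γ₁ + C ⟨Ω, Γ⟩` satisfies
`Ġ = (ε − 1)(A − C) Ω₁ (Γ₂Ω₃ − Γ₃Ω₂)`. -/
theorem spherical_ball_bearing_G_derivative
    (A C D : ℝ) (hA : 0 < A) (hC : 0 < C) (hD : 0 < D) (d ε : ℝ)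
    (Ω Γ : ℝ → Fin 3 → ℝ)
    (hΩ : Differentiable ℝ Ω)
    (hunit : ∀ t : ℝ, Γ t ⬝ᵥ Γ t = 1)
    (M : ℝ → Fin 3 → ℝ)
    (hM : ∀ t : ℝ, M t = (modInertia A C C D (Γ t)).mulVec (Ω t) + d • Γ t)
    (hMdot : ∀ t : ℝ, HasDerivAt M (M t ⨯₃ Ω t) t)
    (hΓdot : ∀ t : ℝ, HasDerivAt Γ (ε • (Γ t ⨯₃ Ω t)) t) :
    ∀ t : ℝ,
      HasDerivAt (fun s => (A - C) * Ω s 0 * Γ s 0 + C * (Ω s ⬝ᵥ Γ s))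
        ((ε - 1) * (A - C) * Ω t 0 * (Γ t 1 * Ω t 2 - Γ t 2 * Ω t 1)) t :=
  spherical_ball_bearing_G_derivative_general A C D d ε Ω Γ hunit M hM hMdot hΓdot
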